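/- arXiv:1609.06016 — 3 statements merged into one kernel-verified Lean document; each statement's English description precedes it below -/
import Mathlib

section
/- Let S : H → H be nonexpansive with a fixed point p, Q an α-contraction (α ∈ (0,1)), B a strongly positive self-adjoint bounded linear operator with constant γ̄ > 0, γ > 0 with γα < γ̄, and {αₙ} ⊂ (0,1) with ‖I − αₙB‖ ≤ 1 − αₙγ̄ for all n. If {xₙ} satisfies the implicit midpoint recursion xₙ₊₁ = αₙγQ(xₙ) + (I − αₙB)S((xₙ + xₙ₊₁)/2), then for all n: ‖xₙ₊₁ − p‖ ≤ max{‖x₀ − p‖, ‖γQ(p) − Bp‖/(γ̄ − γα)}; in particular {xₙ} is bounded. -/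
/-!
Write `u = ‖xₙ - p‖`, `v = ‖xₙ₊₁ - p‖`, `c = ‖γQ(p) - Bp‖` and `t = 1 - αₙγ̄`. Subtracting
`p = (I - αₙB)p + αₙBp` from the recursion and using that `S` is nonexpansive and fixes `p` gives
`v ≤ αₙ(γα u + c) + t (u + v) / 2`. Solved for `v`, this bounds `v` by a convex combination of `u`
and `c / (γ̄ - γα)`, so the maximum of `‖x₀ - p‖` and `c / (γ̄ - γα)` bounds every `‖xₙ - p‖`.
-/

open scoped RealInnerProductSpace

section ImplicitMidpoint

variable {E : Type*} [NormedAddCommGroup E] [NormedSpace ℝ E]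

lemma norm_smul_two_inv_add_sub_le (x y p : E) :
    ‖(2 : ℝ)⁻¹ • (x + y) - p‖ ≤ (‖x - p‖ + ‖y - p‖) / 2 := by
  have hmid : (2 : ℝ)⁻¹ • (x + y) - p = (2 : ℝ)⁻¹ • ((x - p) + (y - p)) := by module
  rw [hmid, norm_smul, norm_inv, Real.norm_ofNat, inv_mul_eq_div]
  gcongr
  exact norm_add_le _ _

lemma norm_smul_apply_sub_le {Q : E → E} {α : ℝ} (hQ : ∀ x y, ‖Q x - Q y‖ ≤ α * ‖x - y‖)
    {γ : ℝ} (hγ : 0 ≤ γ) (x p z : E) :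
    ‖γ • Q x - z‖ ≤ γ * α * ‖x - p‖ + ‖γ • Q p - z‖ :=
  calc ‖γ • Q x - z‖ ≤ ‖γ • Q x - γ • Q p‖ + ‖γ • Q p - z‖ := norm_sub_le_norm_sub_add_norm_sub _ _ _
    _ = γ * ‖Q x - Q p‖ + ‖γ • Q p - z‖ := by
        rw [← smul_sub, norm_smul, Real.norm_of_nonneg hγ]
    _ ≤ γ * α * ‖x - p‖ + ‖γ • Q p - z‖ := by
        rw [mul_assoc]; gcongr; exact hQ x p

lemma norm_implicitMidpoint_sub_le {S Q : E → E} (hS : ∀ x y, ‖S x - S y‖ ≤ ‖x - y‖) {p : E}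
    (hp : S p = p) {α : ℝ} (hQ : ∀ x y, ‖Q x - Q y‖ ≤ α * ‖x - y‖) (B : E →L[ℝ] E)
    {a γ : ℝ} (ha : 0 ≤ a) (hγ : 0 ≤ γ) {x y : E}
    (hy : y = a • (γ • Q x) + ((1 : E →L[ℝ] E) - a • B) (S ((2 : ℝ)⁻¹ • (x + y)))) :
    ‖y - p‖ ≤ a * (γ * α * ‖x - p‖ + ‖γ • Q p - B p‖)
      + ‖(1 : E →L[ℝ] E) - a • B‖ * ((‖x - p‖ + ‖y - p‖) / 2) := by
  set m := (2 : ℝ)⁻¹ • (x + y)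
  have hsplit : y - p = a • (γ • Q x - B p) + ((1 : E →L[ℝ] E) - a • B) (S m - p) := by
    conv_lhs => rw [hy]
    simp only [sub_apply, smul_apply, one_apply_eq_self, map_sub, smul_sub]
    abel
  have hSm : ‖S m - p‖ ≤ (‖x - p‖ + ‖y - p‖) / 2 :=
    calc ‖S m - p‖ = ‖S m - S p‖ := by rw [hp]
      _ ≤ ‖m - p‖ := hS m p
      _ ≤ (‖x - p‖ + ‖y - p‖) / 2 := norm_smul_two_inv_add_sub_le x y p
  calc ‖y - p‖
      ≤ a * ‖γ • Q x - B p‖ + ‖(1 : E →L[ℝ] E) - a • B‖ * ‖S m - p‖ := by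
        rw [hsplit]
        refine (norm_add_le _ _).trans (add_le_add ?_ (ContinuousLinearMap.le_opNorm _ _))
        rw [norm_smul, Real.norm_of_nonneg ha]
    _ ≤ _ := by
        gcongr
        exact norm_smul_apply_sub_le hQ hγ x p (B p)

end ImplicitMidpoint

lemma le_of_le_implicit_step {a κ γbar u v c M : ℝ} (ha : 0 ≤ a) (hκ : 0 ≤ κ) (hκγ : κ < γbar)
    (ht : 0 ≤ 1 - a * γbar) (hv : v ≤ a * (κ * u + c) + (1 - a * γbar) * ((u + v) / 2))
    (hu : u ≤ M) (hc : c ≤ (γbar - κ) * M) : v ≤ M := by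
  have hpos : 0 < (1 + a * γbar) / 2 := by nlinarith [mul_nonneg ha (hκ.trans hκγ.le)]
  have hscaled : (1 + a * γbar) / 2 * v ≤ (1 + a * γbar) / 2 * M := by
    nlinarith [mul_le_mul_of_nonneg_left hu (mul_nonneg ha hκ),
      mul_le_mul_of_nonneg_left hu ht, mul_le_mul_of_nonneg_left hc ha]
  exact le_of_mul_le_mul_left hscaled hpos

theorem stmt_9_general {H : Type*} [NormedAddCommGroup H] [InnerProductSpace ℝ H]
    (S : H → H) (hS : ∀ x y : H, ‖S x - S y‖ ≤ ‖x - y‖)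
    (p : H) (hp : S p = p)
    (Q : H → H) (α : ℝ) (hα0 : 0 < α)
    (hQ : ∀ x y : H, ‖Q x - Q y‖ ≤ α * ‖x - y‖)
    (B : H →L[ℝ] H)
    (γbar : ℝ)
    (γ : ℝ) (hγ0 : 0 < γ) (hγ : γ * α < γbar)
    (a : ℕ → ℝ) (ha : ∀ n, a n ∈ Set.Ioo (0 : ℝ) 1)
    (haB : ∀ n, ‖(1 : H →L[ℝ] H) - a n • B‖ ≤ 1 - a n * γbar)
    (x : ℕ → H)
    (hrec : ∀ n, x (n + 1)
      = a n • (γ • Q (x n)) + ((1 : H →L[ℝ] H) - a n • B) (S ((2 : ℝ)⁻¹ • (x n + x (n + 1))))) :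
    (∀ n, ‖x (n + 1) - p‖ ≤ max ‖x 0 - p‖ (‖γ • Q p - B p‖ / (γbar - γ * α))) ∧
    ∃ M : ℝ, ∀ n, ‖x n‖ ≤ M := by
  set M := max ‖x 0 - p‖ (‖γ • Q p - B p‖ / (γbar - γ * α))
  have hc : ‖γ • Q p - B p‖ ≤ (γbar - γ * α) * M :=
    (div_le_iff₀' (sub_pos.2 hγ)).1 (le_max_right _ _)
  have hbound : ∀ n, ‖x n - p‖ ≤ M := by
    intro n
    induction n with
    | zero => exact le_max_left _ _
    | succ n ih =>
      have han := (ha n).1.le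
      have hstep := norm_implicitMidpoint_sub_le hS hp hQ B han hγ0.le (hrec n)
      refine le_of_le_implicit_step han (by positivity) hγ ((norm_nonneg _).trans (haB n)) ?_ ih hc
      exact hstep.trans (by gcongr; exact haB n)
  refine ⟨fun n => hbound (n + 1), M + ‖p‖, fun n => ?_⟩
  calc ‖x n‖ = ‖(x n - p) + p‖ := by rw [sub_add_cancel]
    _ ≤ M + ‖p‖ := (norm_add_le _ _).trans (add_le_add_left (hbound n) _)

theorem stmt_9 {H : Type*} [NormedAddCommGroup H] [InnerProductSpace ℝ H] [CompleteSpace H]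
    (S : H → H) (hS : ∀ x y : H, ‖S x - S y‖ ≤ ‖x - y‖)
    (p : H) (hp : S p = p)
    (Q : H → H) (α : ℝ) (hα0 : 0 < α) (hα1 : α < 1)
    (hQ : ∀ x y : H, ‖Q x - Q y‖ ≤ α * ‖x - y‖)
    (B : H →L[ℝ] H) (hBsa : IsSelfAdjoint B)
    (γbar : ℝ) (hγbar : 0 < γbar)
    (hBpos : ∀ x : H, ⟪B x, x⟫ ≥ γbar * ‖x‖ ^ 2)
    (γ : ℝ) (hγ0 : 0 < γ) (hγ : γ * α < γbar)
    (a : ℕ → ℝ) (ha : ∀ n, a n ∈ Set.Ioo (0 : ℝ) 1)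
    (haB : ∀ n, ‖(1 : H →L[ℝ] H) - a n • B‖ ≤ 1 - a n * γbar)
    (x : ℕ → H)
    (hrec : ∀ n, x (n + 1)
      = a n • (γ • Q (x n)) + ((1 : H →L[ℝ] H) - a n • B) (S ((2 : ℝ)⁻¹ • (x n + x (n + 1))))) :
    (∀ n, ‖x (n + 1) - p‖ ≤ max ‖x 0 - p‖ (‖γ • Q p - B p‖ / (γbar - γ * α))) ∧
    ∃ M : ℝ, ∀ n, ‖x n‖ ≤ M :=
  stmt_9_general S hS p hp Q α hα0 hQ B γbar γ hγ0 hγ a ha haB x hrec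
end

section
/- Let {xₙ} be a sequence in a real Hilbert space H, S : H → H nonexpansive, Q an α-contraction, B strongly positive self-adjoint bounded linear with constant γ̄, γ > 0 with γα < γ̄, and {αₙ} ⊂ (0,1) satisfying αₙ → 0, Σαₙ = ∞, and Σ|αₙ − αₙ₋₁| < ∞. If xₙ₊₁ = αₙγQ(xₙ) + (I − αₙB)S((xₙ + xₙ₊₁)/2) and {xₙ} is bounded and asymptotically regular (‖xₙ₊₁ − xₙ‖ → 0), then ‖xₙ − Sxₙ‖ → 0. -/
/-!
Writing `mₙ = (xₙ + xₙ₊₁)/2`, the recursion says `xₙ₊₁ - S mₙ = αₙ (γ Q xₙ - B S mₙ)`. The bracket is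
bounded because `xₙ` is and all maps involved are Lipschitz, so this residual tends to zero with
`αₙ`. Nonexpansiveness of `S` gives `‖xₙ - S xₙ‖ ≤ ‖xₙ - xₙ₊₁‖ + ‖xₙ₊₁ - S mₙ‖ + ‖mₙ - xₙ‖`,
and both `‖xₙ₊₁ - xₙ‖` and `‖mₙ - xₙ‖ = ‖xₙ₊₁ - xₙ‖/2` tend to zero by asymptotic regularity.
-/

open Filter Topology Bornology Set

open scoped RealInnerProductSpace

section NormedSpace

variable {E F : Type*} [SeminormedAddCommGroup E] [SeminormedAddCommGroup F]

theorem LipschitzWith.exists_norm_comp_le {ι : Type*} {K : NNReal} {f : E → F}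
    (hf : LipschitzWith K f) {u : ι → E} (hu : ∃ M, ∀ i, ‖u i‖ ≤ M) :
    ∃ M, ∀ i, ‖f (u i)‖ ≤ M := by
  have hbdd : IsBounded (range (f ∘ u)) := by
    rw [range_comp]
    exact hf.isBounded_image (isBounded_iff_forall_norm_le.2 (by simpa using hu))
  simpa using isBounded_iff_forall_norm_le.1 hbdd

variable [NormedSpace ℝ E]

theorem norm_sub_apply_le_of_nonexpansive {S : E → E} (hS : ∀ x y, ‖S x - S y‖ ≤ ‖x - y‖)
    (u v : E) : ‖u - S u‖ ≤ 3 / 2 * ‖v - u‖ + ‖v - S ((2 : ℝ)⁻¹ • (u + v))‖ := by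
  set m : E := (2 : ℝ)⁻¹ • (u + v)
  have hm : ‖S m - S u‖ ≤ 2⁻¹ * ‖v - u‖ := calc
    ‖S m - S u‖ ≤ ‖m - u‖ := hS m u
    _ = ‖(2 : ℝ)⁻¹ • (v - u)‖ := by congr 1; module
    _ = 2⁻¹ * ‖v - u‖ := by rw [norm_smul]; norm_num
  calc ‖u - S u‖ = ‖(u - v) + (v - S m) + (S m - S u)‖ := by congr 1; abel
    _ ≤ ‖u - v‖ + ‖v - S m‖ + ‖S m - S u‖ := norm_add₃_le
    _ ≤ 3 / 2 * ‖v - u‖ + ‖v - S m‖ := by rw [norm_sub_rev u v]; linarith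

theorem tendsto_norm_sub_apply_of_midpoint_residual {S : E → E}
    (hS : ∀ x y, ‖S x - S y‖ ≤ ‖x - y‖) {x : ℕ → E}
    (hreg : Tendsto (fun n => ‖x (n + 1) - x n‖) atTop (𝓝 0))
    (hres : Tendsto (fun n => x (n + 1) - S ((2 : ℝ)⁻¹ • (x n + x (n + 1)))) atTop (𝓝 0)) :
    Tendsto (fun n => ‖x n - S (x n)‖) atTop (𝓝 0) := by
  have hlim : Tendsto (fun n => 3 / 2 * ‖x (n + 1) - x n‖
      + ‖x (n + 1) - S ((2 : ℝ)⁻¹ • (x n + x (n + 1)))‖) atTop (𝓝 0) := by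
    simpa using (hreg.const_mul (3 / 2)).add hres.norm
  exact squeeze_zero (fun n => norm_nonneg _)
    (fun n => norm_sub_apply_le_of_nonexpansive hS (x n) (x (n + 1))) hlim

theorem exists_norm_midpoint_le {x : ℕ → E} (hx : ∃ M, ∀ n, ‖x n‖ ≤ M) :
    ∃ M, ∀ n, ‖(2 : ℝ)⁻¹ • (x n + x (n + 1))‖ ≤ M := by
  obtain ⟨M, hM⟩ := hx
  refine ⟨M, fun n => ?_⟩
  have hmem := convex_closedBall (0 : E) M (mem_closedBall_zero_iff.2 (hM n))
    (mem_closedBall_zero_iff.2 (hM (n + 1))) (by norm_num : (0 : ℝ) ≤ 2⁻¹)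
    (by norm_num : (0 : ℝ) ≤ 2⁻¹) (by norm_num)
  rwa [← smul_add, mem_closedBall_zero_iff] at hmem

end NormedSpace

theorem stmt_11_general {H : Type*} [NormedAddCommGroup H] [InnerProductSpace ℝ H]
    (S : H → H) (hS : ∀ x y : H, ‖S x - S y‖ ≤ ‖x - y‖)
    (Q : H → H) (α : ℝ)
    (hQ : ∀ x y : H, ‖Q x - Q y‖ ≤ α * ‖x - y‖)
    (B : H →L[ℝ] H)
    (γ : ℝ)
    (a : ℕ → ℝ)
    (ha0 : Filter.Tendsto a Filter.atTop (nhds 0))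
    (x : ℕ → H)
    (hrec : ∀ n, x (n + 1)
      = a n • (γ • Q (x n)) + ((1 : H →L[ℝ] H) - a n • B) (S ((2 : ℝ)⁻¹ • (x n + x (n + 1)))))
    (hbdd : ∃ M : ℝ, ∀ n, ‖x n‖ ≤ M)
    (hasreg : Filter.Tendsto (fun n => ‖x (n + 1) - x n‖) Filter.atTop (nhds 0)) :
    Filter.Tendsto (fun n => ‖x n - S (x n)‖) Filter.atTop (nhds 0) := by
  set m : ℕ → H := fun n => (2 : ℝ)⁻¹ • (x n + x (n + 1))
  have hSlip : LipschitzWith 1 S := LipschitzWith.of_dist_le_mul fun u v => by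
    simpa [dist_eq_norm] using hS u v
  have hQlip : LipschitzWith (Real.toNNReal α) Q := LipschitzWith.of_dist_le' fun u v => by
    simpa [dist_eq_norm] using hQ u v
  obtain ⟨MQ, hMQ⟩ := hQlip.exists_norm_comp_le hbdd
  obtain ⟨MB, hMB⟩ := (B.lipschitz.comp hSlip).exists_norm_comp_le (exists_norm_midpoint_le hbdd)
  have hresidual : ∀ n, x (n + 1) - S (m n) = a n • (γ • Q (x n) - B (S (m n))) := fun n => by
    conv_lhs => rw [hrec n]
    simp only [sub_apply, one_apply_eq_self, smul_apply, smul_sub, m]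
    abel
  have hbracket : IsBoundedUnder (· ≤ ·) atTop fun n => ‖γ • Q (x n) - B (S (m n))‖ :=
    isBoundedUnder_of ⟨|γ| * MQ + MB, fun n => by
      grw [norm_sub_le, norm_smul, Real.norm_eq_abs, hMQ n]
      gcongr
      exact hMB n⟩
  refine tendsto_norm_sub_apply_of_midpoint_residual hS hasreg ?_
  exact (ha0.zero_smul_isBoundedUnder_le hbracket).congr fun n => (hresidual n).symm

theorem stmt_11 {H : Type*} [NormedAddCommGroup H] [InnerProductSpace ℝ H] [CompleteSpace H]
    (S : H → H) (hS : ∀ x y : H, ‖S x - S y‖ ≤ ‖x - y‖)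
    (Q : H → H) (α : ℝ) (hα0 : 0 < α) (hα1 : α < 1)
    (hQ : ∀ x y : H, ‖Q x - Q y‖ ≤ α * ‖x - y‖)
    (B : H →L[ℝ] H) (hBsa : IsSelfAdjoint B)
    (γbar : ℝ) (hγbar : 0 < γbar)
    (hBpos : ∀ x : H, ⟪B x, x⟫ ≥ γbar * ‖x‖ ^ 2)
    (γ : ℝ) (hγ0 : 0 < γ) (hγ : γ * α < γbar)
    (a : ℕ → ℝ) (ha : ∀ n, a n ∈ Set.Ioo (0 : ℝ) 1)
    (ha0 : Filter.Tendsto a Filter.atTop (nhds 0))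
    (hasum : ¬ Summable a)
    (hadiff : Summable (fun n => |a (n + 1) - a n|))
    (x : ℕ → H)
    (hrec : ∀ n, x (n + 1)
      = a n • (γ • Q (x n)) + ((1 : H →L[ℝ] H) - a n • B) (S ((2 : ℝ)⁻¹ • (x n + x (n + 1)))))
    (hbdd : ∃ M : ℝ, ∀ n, ‖x n‖ ≤ M)
    (hasreg : Filter.Tendsto (fun n => ‖x (n + 1) - x n‖) Filter.atTop (nhds 0)) :
    Filter.Tendsto (fun n => ‖x n - S (x n)‖) Filter.atTop (nhds 0) :=
  stmt_11_general S hS Q α hQ B γ a ha0 x hrec hbdd hasreg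
end

section
/- Let S : H → H be nonexpansive on a real Hilbert space H with Fix(S) ≠ ∅, Q an α-contraction (α ∈ (0,1)), and {αₙ} ⊂ (0,1) with αₙ → 0, Σαₙ = ∞, and Σ|αₙ − αₙ₋₁| < ∞. Then the sequence defined by the viscosity implicit midpoint rule xₙ₊₁ = αₙQ(xₙ) + (1 − αₙ)S((xₙ + xₙ₊₁)/2) converges strongly to the unique z ∈ Fix(S) satisfying ⟨(I − Q)z, x − z⟩ ≥ 0 for all x ∈ Fix(S). -/
/-!
The solution `z` of the variational inequality is the fixed point of the contraction `P ∘ Q`,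
where `P` is the metric projection onto the closed convex set `Fix S`. Along the iteration,
first `‖x (n + 1) - x n‖` and then `‖x n - z‖ ^ 2` satisfy recursive inequalities
`t (n + 1) ≤ (1 - γ n) * t n + γ n * σ n + β n` with `∑ γ n = ∞`, which force them to `0`
(Xu's lemma). For the second one, `limsup σ n ≤ 0` because `‖x n - S (x n)‖ → 0`, so by
demiclosedness every weak cluster point of `x` (taken along an ultrafilter, via Banach–Alaoglu)
is a fixed point of `S`, where the variational inequality applies.
-/

open Filter Topology Finset Function
open scoped RealInnerProductSpace

section RealSequences

lemma prod_one_sub_le_exp_neg_sum {ι : Type*} (s : Finset ι) {γ : ι → ℝ} (hγ : ∀ i ∈ s, γ i ≤ 1) :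
    ∏ i ∈ s, (1 - γ i) ≤ Real.exp (-∑ i ∈ s, γ i) := by
  rw [← sum_neg_distrib, Real.exp_sum]
  exact prod_le_prod (fun i hi => sub_nonneg.2 (hγ i hi)) fun i _ => Real.one_sub_le_exp_neg _

lemma tendsto_prod_range_one_sub_of_not_summable {γ : ℕ → ℝ} (hγ0 : ∀ n, 0 ≤ γ n)
    (hγ1 : ∀ n, γ n ≤ 1) (hγ : ¬ Summable γ) :
    Tendsto (fun n => ∏ k ∈ range n, (1 - γ k)) atTop (𝓝 0) :=
  squeeze_zero (fun _ => prod_nonneg fun k _ => sub_nonneg.2 (hγ1 k))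
    (fun _ => prod_one_sub_le_exp_neg_sum _ fun k _ => hγ1 k)
    (Real.tendsto_exp_neg_atTop_nhds_zero.comp
      ((not_summable_iff_tendsto_nat_atTop_of_nonneg hγ0).1 hγ))

lemma le_prod_one_sub_mul_add_sum {t γ β : ℕ → ℝ} {ε : ℝ} (hγ0 : ∀ n, 0 ≤ γ n)
    (hγ1 : ∀ n, γ n ≤ 1) (hβ : ∀ n, 0 ≤ β n)
    (h : ∀ n, t (n + 1) ≤ (1 - γ n) * t n + γ n * ε + β n) (n : ℕ) :
    t n ≤ (∏ k ∈ range n, (1 - γ k)) * (t 0 - ε) + ε + ∑ k ∈ range n, β k := by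
  induction n with
  | zero => simp
  | succ n ih =>
    rw [prod_range_succ, sum_range_succ]
    have hB : 0 ≤ ∑ k ∈ range n, β k := sum_nonneg fun k _ => hβ k
    nlinarith [h n, mul_le_mul_of_nonneg_left ih (sub_nonneg.2 (hγ1 n)), mul_nonneg (hγ0 n) hB]

/-- Xu's lemma. -/
theorem tendsto_zero_of_le_one_sub_mul_add {t γ σ β : ℕ → ℝ} (ht : ∀ n, 0 ≤ t n)
    (hγ0 : ∀ n, 0 ≤ γ n) (hγ1 : ∀ n, γ n ≤ 1) (hγ : ¬ Summable γ)
    (hσ : ∀ ε > 0, ∀ᶠ n in atTop, σ n ≤ ε) (hβ0 : ∀ n, 0 ≤ β n) (hβ : Summable β)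
    (h : ∀ n, t (n + 1) ≤ (1 - γ n) * t n + γ n * σ n + β n) :
    Tendsto t atTop (𝓝 0) := by
  refine tendsto_order.2 ⟨fun c hc => .of_forall fun n => hc.trans_le (ht n), fun c hc => ?_⟩
  have hε : 0 < c / 4 := by positivity
  obtain ⟨N, hN⟩ := eventually_atTop.1
    ((hσ _ hε).and ((tendsto_sum_nat_add β).eventually_le_const hε))
  have hshift (m : ℕ) : t (m + N) ≤ (∏ k ∈ range m, (1 - γ (k + N))) * (t N - c / 4) + c / 4
      + ∑ k ∈ range m, β (k + N) := by
    have := le_prod_one_sub_mul_add_sum (t := fun m => t (m + N)) (γ := fun k => γ (k + N))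
      (β := fun k => β (k + N)) (ε := c / 4) (fun _ => hγ0 _) (fun _ => hγ1 _) (fun _ => hβ0 _)
      (fun m => ?_) m
    · simpa using this
    rw [add_right_comm]
    nlinarith [h (m + N), (hN (m + N) (by omega)).1, hγ0 (m + N)]
  have htail (m : ℕ) : ∑ k ∈ range m, β (k + N) ≤ c / 4 :=
    (((summable_nat_add_iff N).2 hβ).sum_le_tsum _ fun _ _ => hβ0 _).trans (hN N le_rfl).2
  have hprod : Tendsto (fun m => (∏ k ∈ range m, (1 - γ (k + N))) * (t N - c / 4)) atTop (𝓝 0) := by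
    simpa using (tendsto_prod_range_one_sub_of_not_summable (fun _ => hγ0 _) (fun _ => hγ1 _)
      ((summable_nat_add_iff N).not.2 hγ)).mul_const (t N - c / 4)
  rw [← map_add_atTop_eq_nat N, eventually_map]
  filter_upwards [hprod.eventually_le_const hε] with m hm
  linarith [hshift m, htail m]

end RealSequences

lemma convex_fixedPoints_of_norm_sub_le {E : Type*} [NormedAddCommGroup E] [NormedSpace ℝ E]
    [StrictConvexSpace ℝ E] {S : E → E} (hS : ∀ x y, ‖S x - S y‖ ≤ ‖x - y‖) :
    Convex ℝ (fixedPoints S) := by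
  intro p hp q hq s t hs ht hst
  obtain rfl : s = 1 - t := by linarith
  rw [← AffineMap.lineMap_apply_module]
  set w := AffineMap.lineMap p q t
  have hdist (u v : E) : dist (S u) (S v) ≤ dist u v := by simpa [dist_eq_norm] using hS u v
  have hpw : dist p (S w) ≤ t * dist p q := by
    calc dist p (S w) = dist (S p) (S w) := by rw [hp.eq]
      _ ≤ t * dist p q := (hdist p w).trans_eq (by rw [dist_left_lineMap, Real.norm_of_nonneg ht])
  have hwq : dist (S w) q ≤ (1 - t) * dist p q := by
    calc dist (S w) q = dist (S w) (S q) := by rw [hq.eq]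
      _ ≤ (1 - t) * dist p q :=
        (hdist w q).trans_eq (by rw [dist_lineMap_right, Real.norm_of_nonneg hs])
  -- equality in the triangle inequality through `S w` pins `S w` down on the segment
  have := dist_triangle p (S w) q
  exact eq_lineMap_of_dist_eq_mul_of_dist_eq_mul (by linarith) (by linarith)

lemma norm_inv_two_smul_add_sub_le {E : Type*} [SeminormedAddCommGroup E] [NormedSpace ℝ E]
    (u v w : E) : ‖(2 : ℝ)⁻¹ • (u + v) - w‖ ≤ (‖u - w‖ + ‖v - w‖) / 2 := by
  rw [show (2 : ℝ)⁻¹ • (u + v) - w = (2 : ℝ)⁻¹ • ((u - w) + (v - w)) by module, norm_smul,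
    Real.norm_of_nonneg (by norm_num)]
  linarith [norm_add_le (u - w) (v - w)]

section Hilbert

variable {H : Type*} [NormedAddCommGroup H] [InnerProductSpace ℝ H]

lemma Ultrafilter.exists_forall_tendsto_inner [CompleteSpace H] {ι : Type*} (U : Ultrafilter ι)
    {u : ι → H} {C : ℝ} (hu : ∀ i, ‖u i‖ ≤ C) :
    ∃ b : H, ∀ y, Tendsto (fun i => ⟪u i, y⟫) U (𝓝 ⟪b, y⟫) := by
  let f : ι → WeakDual ℝ H := fun i => StrongDual.toWeakDual (InnerProductSpace.toDual ℝ H (u i))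
  have hU : (U.map f : Filter (WeakDual ℝ H))
      ≤ 𝓟 (WeakDual.toStrongDual ⁻¹' Metric.closedBall 0 C) := by
    rw [Ultrafilter.coe_map, le_principal_iff, Filter.mem_map]
    exact univ_mem' fun i => by simpa [f] using hu i
  obtain ⟨φ, -, hφ⟩ := (WeakDual.isCompact_closedBall 0 C).ultrafilter_le_nhds _ hU
  refine ⟨(InnerProductSpace.toDual ℝ H).symm (WeakDual.toStrongDual φ), fun y => ?_⟩
  rw [InnerProductSpace.toDual_symm_apply]
  exact ((WeakDual.eval_continuous y).tendsto φ).comp (by rwa [Ultrafilter.coe_map] at hφ)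

/-- Demiclosedness of `I - S` at `0`. -/
lemma eq_of_tendsto_inner_of_tendsto_norm_sub {ι : Type*} {l : Filter ι} [l.NeBot] {S : H → H}
    (hS : ∀ x y, ‖S x - S y‖ ≤ ‖x - y‖) {u : ι → H} {b : H} {C : ℝ} (hu : ∀ i, ‖u i‖ ≤ C)
    (hub : ∀ y, Tendsto (fun i => ⟪u i, y⟫) l (𝓝 ⟪b, y⟫))
    (hreg : Tendsto (fun i => ‖u i - S (u i)‖) l (𝓝 0)) : S b = b := by
  set e := fun i => ‖u i - S (u i)‖
  have key (i : ι) : 2 * ⟪u i - b, b - S b⟫ + ‖b - S b‖ ^ 2 ≤ e i * (e i + 2 * (C + ‖b‖)) := by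
    have h1 : ‖u i - S b‖ ≤ e i + ‖u i - b‖ :=
      (norm_sub_le_norm_sub_add_norm_sub _ (S (u i)) _).trans (add_le_add le_rfl (hS _ _))
    have h2 : ‖u i - b‖ ≤ C + ‖b‖ := (norm_sub_le _ _).trans (by linarith [hu i])
    have h3 : ‖u i - S b‖ ^ 2 = ‖u i - b‖ ^ 2 + 2 * ⟪u i - b, b - S b⟫ + ‖b - S b‖ ^ 2 := by
      rw [← norm_add_sq_real, sub_add_sub_cancel]
    nlinarith [pow_le_pow_left₀ (norm_nonneg _) h1 2,
      mul_le_mul_of_nonneg_left h2 (norm_nonneg (u i - S (u i)))]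
  have hlhs : Tendsto (fun i => 2 * ⟪u i - b, b - S b⟫ + ‖b - S b‖ ^ 2) l (𝓝 (‖b - S b‖ ^ 2)) := by
    have : Tendsto (fun i => ⟪u i - b, b - S b⟫) l (𝓝 0) := by
      simpa [inner_sub_left] using (hub (b - S b)).sub_const ⟪b, b - S b⟫
    simpa using (this.const_mul 2).add_const (‖b - S b‖ ^ 2)
  have hrhs : Tendsto (fun i => e i * (e i + 2 * (C + ‖b‖))) l (𝓝 0) := by
    simpa using hreg.mul (hreg.add_const (2 * (C + ‖b‖)))
  have : ‖b - S b‖ ^ 2 ≤ 0 := le_of_tendsto_of_tendsto' hlhs hrhs key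
  exact (sub_eq_zero.1 (norm_eq_zero.1 (by nlinarith [norm_nonneg (b - S b)]))).symm

lemma eventually_inner_sub_le_of_tendsto_norm_sub [CompleteSpace H] {ι : Type*} {l : Filter ι}
    {S : H → H} (hS : ∀ x y, ‖S x - S y‖ ≤ ‖x - y‖) {v z : H}
    (hv : ∀ w, S w = w → ⟪v, w - z⟫ ≤ 0) {u : ι → H} {C : ℝ} (hu : ∀ i, ‖u i‖ ≤ C)
    (hreg : Tendsto (fun i => ‖u i - S (u i)‖) l (𝓝 0)) {ε : ℝ} (hε : 0 < ε) :
    ∀ᶠ i in l, ⟪v, u i - z⟫ ≤ ε := by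
  by_contra hfreq
  rw [not_eventually, frequently_iff_neBot] at hfreq
  obtain ⟨U, hU⟩ := exists_ultrafilter_le _ (h := hfreq)
  obtain ⟨b, hb⟩ := U.exists_forall_tendsto_inner hu
  have hSb : S b = b :=
    eq_of_tendsto_inner_of_tendsto_norm_sub hS hu hb (hreg.mono_left (hU.trans inf_le_left))
  have hlim : Tendsto (fun i => ⟪v, u i - z⟫) U (𝓝 ⟪v, b - z⟫) := by
    simpa [inner_sub_right, real_inner_comm v] using (hb v).sub_const ⟪z, v⟫
  have hlarge : ∀ᶠ i in (U : Filter ι), ε ≤ ⟪v, u i - z⟫ :=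
    Eventually.mono (le_principal_iff.1 (hU.trans inf_le_right)) fun i hi => (not_le.1 hi).le
  linarith [ge_of_tendsto hlim hlarge, hv b hSb]

lemma norm_sub_le_of_inner_sub_nonpos {p p' x x' : H} (h : ⟪x - p, p' - p⟫ ≤ 0)
    (h' : ⟪x' - p', p - p'⟫ ≤ 0) : ‖p - p'‖ ≤ ‖x - x'‖ := by
  have hsq : ‖p - p'‖ ^ 2 ≤ ‖x - x'‖ * ‖p - p'‖ := by
    have : ⟪x - x', p - p'⟫ = ‖p - p'‖ ^ 2 - ⟪x - p, p' - p⟫ - ⟪x' - p', p - p'⟫ := by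
      rw [← real_inner_self_eq_norm_sq]
      simp only [inner_sub_left, inner_sub_right, real_inner_comm]
      ring
    linarith [real_inner_le_norm (x - x') (p - p')]
  nlinarith [norm_nonneg (p - p'), norm_nonneg (x - x')]

lemma eq_of_inner_sub_nonneg {Q : H → H} {α : ℝ} (hα : α < 1)
    (hQ : ∀ x y, ‖Q x - Q y‖ ≤ α * ‖x - y‖) {z z' : H} (h : 0 ≤ ⟪z - Q z, z' - z⟫)
    (h' : 0 ≤ ⟪z' - Q z', z - z'⟫) : z = z' := by
  have hle : ‖z - z'‖ ≤ α * ‖z - z'‖ := by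
    refine (norm_sub_le_of_inner_sub_nonpos (x := Q z) (x' := Q z') ?_ ?_).trans (hQ z z')
    · rw [← neg_sub z, inner_neg_left]; linarith
    · rw [← neg_sub z', inner_neg_left]; linarith
  exact sub_eq_zero.1 (norm_eq_zero.1 (by nlinarith [norm_nonneg (z - z')]))

lemma exists_mem_forall_inner_sub_nonneg [CompleteSpace H] {K : Set H} (hne : K.Nonempty)
    (hcl : IsClosed K) (hcv : Convex ℝ K) {Q : H → H} {α : ℝ} (hα : α < 1)
    (hQ : ∀ x y, ‖Q x - Q y‖ ≤ α * ‖x - y‖) : ∃ z ∈ K, ∀ w ∈ K, 0 ≤ ⟪z - Q z, w - z⟫ := by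
  have hproj (x : H) : ∃ p ∈ K, ∀ w ∈ K, ⟪x - p, w - p⟫ ≤ 0 := by
    obtain ⟨p, hp, hmin⟩ := exists_norm_eq_iInf_of_complete_convex hne hcl.isComplete hcv x
    exact ⟨p, hp, (norm_eq_iInf_iff_real_inner_le_zero hcv hp).1 hmin⟩
  choose P hPK hP using hproj
  have hcontr : ContractingWith α.toNNReal (P ∘ Q) := by
    refine ⟨Real.toNNReal_lt_one.2 hα, LipschitzWith.of_dist_le_mul fun x y => ?_⟩
    rw [dist_eq_norm, dist_eq_norm, Real.coe_toNNReal']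
    calc ‖P (Q x) - P (Q y)‖ ≤ ‖Q x - Q y‖ :=
          norm_sub_le_of_inner_sub_nonpos (hP _ _ (hPK _)) (hP _ _ (hPK _))
      _ ≤ max α 0 * ‖x - y‖ := (hQ x y).trans (by gcongr; exact le_max_left _ _)
  set z := ContractingWith.fixedPoint (P ∘ Q) hcontr
  have hz : P (Q z) = z := hcontr.fixedPoint_isFixedPt
  refine ⟨z, hz ▸ hPK _, fun w hw => ?_⟩
  have := hP (Q z) w hw
  rw [hz] at this
  rw [← neg_sub, inner_neg_left]
  linarith

end Hilbert

section ViscosityMidpoint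

variable {H : Type*} [NormedAddCommGroup H] [InnerProductSpace ℝ H]
  {S Q : H → H} {α : ℝ} {a : ℕ → ℝ} {x y : ℕ → H}

lemma norm_sub_fixedPoint_le (hS : ∀ x y, ‖S x - S y‖ ≤ ‖x - y‖) (hα0 : 0 ≤ α) (hα1 : α < 1)
    (hQ : ∀ x y, ‖Q x - Q y‖ ≤ α * ‖x - y‖) (ha : ∀ n, a n ∈ Set.Icc (0 : ℝ) 1)
    (hy : ∀ n, y n = (2 : ℝ)⁻¹ • (x n + x (n + 1)))
    (hrec : ∀ n, x (n + 1) = a n • Q (x n) + (1 - a n) • S (y n))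
    {p : H} (hp : S p = p) (n : ℕ) : ‖x n - p‖ ≤ max ‖x 0 - p‖ (‖Q p - p‖ / (1 - α)) := by
  set M := max ‖x 0 - p‖ (‖Q p - p‖ / (1 - α))
  have hM : ‖Q p - p‖ ≤ (1 - α) * M := by
    rw [mul_comm, ← div_le_iff₀ (by linarith)]
    exact le_max_right _ _
  induction n with
  | zero => exact le_max_left _ _
  | succ n ih =>
    obtain ⟨ha0, ha1⟩ := ha n
    have hstep : ‖x (n + 1) - p‖ ≤ a n * ‖Q (x n) - p‖ + (1 - a n) * ‖S (y n) - p‖ := by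
      rw [show x (n + 1) - p = a n • (Q (x n) - p) + (1 - a n) • (S (y n) - p) by
        rw [hrec n]; module]
      refine (norm_add_le _ _).trans_eq ?_
      rw [norm_smul, norm_smul, Real.norm_of_nonneg ha0, Real.norm_of_nonneg (by linarith)]
    have hQx : ‖Q (x n) - p‖ ≤ α * ‖x n - p‖ + ‖Q p - p‖ :=
      (norm_sub_le_norm_sub_add_norm_sub _ (Q p) _).trans (by linarith [hQ (x n) p])
    have hSy : ‖S (y n) - p‖ ≤ (‖x n - p‖ + ‖x (n + 1) - p‖) / 2 := by
      have := (hS (y n) p).trans (hy n ▸ norm_inv_two_smul_add_sub_le (x n) (x (n + 1)) p)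
      rwa [hp] at this
    nlinarith [mul_le_mul_of_nonneg_left hQx ha0, mul_le_mul_of_nonneg_left hSy (sub_nonneg.2 ha1),
      mul_le_mul_of_nonneg_left ih (mul_nonneg ha0 hα0),
      mul_le_mul_of_nonneg_left ih (sub_nonneg.2 ha1)]

lemma exists_forall_norm_sub_le (hS : ∀ x y, ‖S x - S y‖ ≤ ‖x - y‖) (hα0 : 0 ≤ α) (hα1 : α < 1)
    (hQ : ∀ x y, ‖Q x - Q y‖ ≤ α * ‖x - y‖) (ha : ∀ n, a n ∈ Set.Icc (0 : ℝ) 1)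
    (hy : ∀ n, y n = (2 : ℝ)⁻¹ • (x n + x (n + 1)))
    (hrec : ∀ n, x (n + 1) = a n • Q (x n) + (1 - a n) • S (y n))
    {p : H} (hp : S p = p) : ∃ K, ∀ n, ‖Q (x n) - S (y n)‖ ≤ K := by
  set M := max ‖x 0 - p‖ (‖Q p - p‖ / (1 - α))
  have hM := norm_sub_fixedPoint_le hS hα0 hα1 hQ ha hy hrec hp
  refine ⟨α * M + ‖Q p - p‖ + M, fun n => ?_⟩
  have hQx : ‖Q (x n) - Q p‖ ≤ α * M := (hQ _ _).trans (mul_le_mul_of_nonneg_left (hM n) hα0)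
  have hSy : ‖p - S (y n)‖ ≤ M := by
    rw [norm_sub_rev, ← hp]
    refine (hS _ _).trans ((hy n ▸ norm_inv_two_smul_add_sub_le _ _ _).trans ?_)
    linarith [hM n, hM (n + 1)]
  have := norm_sub_le_norm_sub_add_norm_sub (Q (x n)) (Q p) (S (y n))
  have := norm_sub_le_norm_sub_add_norm_sub (Q p) p (S (y n))
  linarith

lemma norm_sub_succ_le (hS : ∀ x y, ‖S x - S y‖ ≤ ‖x - y‖) (hα1 : α ≤ 1)
    (hQ : ∀ x y, ‖Q x - Q y‖ ≤ α * ‖x - y‖) (ha : ∀ n, a n ∈ Set.Icc (0 : ℝ) 1)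
    (hy : ∀ n, y n = (2 : ℝ)⁻¹ • (x n + x (n + 1)))
    (hrec : ∀ n, x (n + 1) = a n • Q (x n) + (1 - a n) • S (y n))
    {K : ℝ} (hK : ∀ n, ‖Q (x n) - S (y n)‖ ≤ K) (n : ℕ) :
    ‖x (n + 2) - x (n + 1)‖
      ≤ (1 - (1 - α) * a (n + 1)) * ‖x (n + 1) - x n‖ + 2 * K * |a (n + 1) - a n| := by
  rw [show n + 2 = n + 1 + 1 from rfl]
  obtain ⟨ha0, ha1⟩ := ha (n + 1)
  have hsplit : x (n + 1 + 1) - x (n + 1) = a (n + 1) • (Q (x (n + 1)) - Q (x n))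
      + (1 - a (n + 1)) • (S (y (n + 1)) - S (y n)) + (a (n + 1) - a n) • (Q (x n) - S (y n)) := by
    linear_combination (norm := module) hrec (n + 1) - hrec n
  have hmid : ‖y (n + 1) - y n‖ ≤ (‖x (n + 1) - x n‖ + ‖x (n + 1 + 1) - x (n + 1)‖) / 2 := by
    rw [hy, hy, show (2 : ℝ)⁻¹ • (x (n + 1) + x (n + 1 + 1)) - (2 : ℝ)⁻¹ • (x n + x (n + 1))
      = (2 : ℝ)⁻¹ • ((x (n + 1) - x n) + (x (n + 1 + 1) - x (n + 1))) by module, norm_smul,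
      Real.norm_of_nonneg (by norm_num)]
    linarith [norm_add_le (x (n + 1) - x n) (x (n + 1 + 1) - x (n + 1))]
  have hnorm : ‖x (n + 1 + 1) - x (n + 1)‖ ≤ a (n + 1) * (α * ‖x (n + 1) - x n‖)
      + (1 - a (n + 1)) * ((‖x (n + 1) - x n‖ + ‖x (n + 1 + 1) - x (n + 1)‖) / 2)
      + |a (n + 1) - a n| * K := by
    nth_rewrite 1 [hsplit]
    refine (norm_add₃_le).trans (add_le_add (add_le_add ?_ ?_) ?_)
    · rw [norm_smul, Real.norm_of_nonneg ha0]; exact mul_le_mul_of_nonneg_left (hQ _ _) ha0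
    · rw [norm_smul, Real.norm_of_nonneg (by linarith)]
      exact mul_le_mul_of_nonneg_left ((hS _ _).trans hmid) (by linarith)
    · rw [norm_smul, Real.norm_eq_abs]; exact mul_le_mul_of_nonneg_left (hK n) (abs_nonneg _)
  have hK0 : 0 ≤ K := (norm_nonneg _).trans (hK 0)
  -- solving `hnorm` for the left side divides by `(1 + a (n + 1)) / 2`; the claimed factor is
  -- enough since `(1 + a) * (1 - (1 - α) * a) - (1 - a + 2 * a * α) = (1 - α) * a * (1 - a) ≥ 0`
  nlinarith [mul_nonneg (mul_nonneg ha0 (sub_nonneg.2 hα1))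
      (mul_nonneg (sub_nonneg.2 ha1) (norm_nonneg (x (n + 1) - x n))),
    mul_nonneg (mul_nonneg ha0 (abs_nonneg (a (n + 1) - a n))) hK0]

lemma tendsto_norm_sub_succ (hS : ∀ x y, ‖S x - S y‖ ≤ ‖x - y‖) (hα0 : 0 ≤ α) (hα1 : α < 1)
    (hQ : ∀ x y, ‖Q x - Q y‖ ≤ α * ‖x - y‖) (ha : ∀ n, a n ∈ Set.Icc (0 : ℝ) 1)
    (hasum : ¬ Summable a) (hadiff : Summable fun n => |a (n + 1) - a n|)
    (hy : ∀ n, y n = (2 : ℝ)⁻¹ • (x n + x (n + 1)))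
    (hrec : ∀ n, x (n + 1) = a n • Q (x n) + (1 - a n) • S (y n))
    {K : ℝ} (hK : ∀ n, ‖Q (x n) - S (y n)‖ ≤ K) :
    Tendsto (fun n => ‖x (n + 1) - x n‖) atTop (𝓝 0) := by
  have hK0 : 0 ≤ K := (norm_nonneg _).trans (hK 0)
  refine tendsto_zero_of_le_one_sub_mul_add (γ := fun n => (1 - α) * a (n + 1)) (σ := 0)
    (β := fun n => 2 * K * |a (n + 1) - a n|) (fun _ => norm_nonneg _)
    (fun n => mul_nonneg (by linarith) (ha _).1) (fun n => ?_) ?_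
    (fun ε hε => .of_forall fun _ => hε.le) (fun n => by positivity) (hadiff.mul_left _)
    (fun n => by simpa using norm_sub_succ_le hS hα1.le hQ ha hy hrec hK n)
  · exact mul_le_one₀ (sub_le_self _ hα0) (ha _).1 (ha _).2
  · rw [summable_mul_left_iff (by linarith), summable_nat_add_iff 1]
    exact hasum

lemma tendsto_norm_sub_map (hS : ∀ x y, ‖S x - S y‖ ≤ ‖x - y‖) (ha : ∀ n, a n ∈ Set.Icc (0 : ℝ) 1)
    (ha0 : Tendsto a atTop (𝓝 0)) (hy : ∀ n, y n = (2 : ℝ)⁻¹ • (x n + x (n + 1)))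
    (hrec : ∀ n, x (n + 1) = a n • Q (x n) + (1 - a n) • S (y n))
    {K : ℝ} (hK : ∀ n, ‖Q (x n) - S (y n)‖ ≤ K)
    (hd : Tendsto (fun n => ‖x (n + 1) - x n‖) atTop (𝓝 0)) :
    Tendsto (fun n => ‖x n - S (x n)‖) atTop (𝓝 0) := by
  refine squeeze_zero (fun _ => norm_nonneg _) (fun n => ?_)
    (by simpa using (hd.const_mul (3 / 2)).add (ha0.mul_const K))
  have hx : ‖x (n + 1) - S (y n)‖ ≤ a n * K := by
    rw [show x (n + 1) - S (y n) = a n • (Q (x n) - S (y n)) by rw [hrec n]; module, norm_smul,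
      Real.norm_of_nonneg (ha n).1]
    exact mul_le_mul_of_nonneg_left (hK n) (ha n).1
  have hSy : ‖S (y n) - S (x n)‖ ≤ 1 / 2 * ‖x (n + 1) - x n‖ := by
    refine (hS _ _).trans_eq ?_
    rw [hy, show (2 : ℝ)⁻¹ • (x n + x (n + 1)) - x n = (2 : ℝ)⁻¹ • (x (n + 1) - x n) by module,
      norm_smul]
    norm_num
  calc ‖x n - S (x n)‖ ≤ ‖x n - x (n + 1)‖ + (‖x (n + 1) - S (y n)‖ + ‖S (y n) - S (x n)‖) :=
        (norm_sub_le_norm_sub_add_norm_sub _ (x (n + 1)) _).trans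
          (by gcongr; exact norm_sub_le_norm_sub_add_norm_sub _ _ _)
    _ ≤ 3 / 2 * ‖x (n + 1) - x n‖ + a n * K := by rw [norm_sub_rev (x n)]; linarith

lemma sq_le_one_sub_mul_sq_add_mul_max {a α u v s : ℝ} (ha0 : 0 ≤ a) (ha1 : a ≤ 1) (hα0 : 0 ≤ α)
    (hα1 : α ≤ 1) (h : v ^ 2 ≤ a * (α * u * v + s) + (1 - a) * ((u + v) / 2 * v)) :
    v ^ 2 ≤ (1 - (1 - α) * a) * u ^ 2 + 4 * a * max s 0 := by
  set m := max s 0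
  have hD : 0 < 1 + a * (3 - 2 * α) := by nlinarith
  have hcross : (2 * a * α + (1 - a)) * (2 * u * v) ≤ (2 * a * α + (1 - a)) * (u ^ 2 + v ^ 2) :=
    mul_le_mul_of_nonneg_left (by nlinarith [sq_nonneg (u - v)]) (by nlinarith)
  have hstep : (1 + a * (3 - 2 * α)) * v ^ 2 ≤ (1 - a + 2 * a * α) * u ^ 2 + 4 * a * s := by
    nlinarith
  have hcoef : 0 ≤ a * (1 - α) * (3 - a * (3 - 2 * α)) * u ^ 2 := by
    have : 0 ≤ 3 - a * (3 - 2 * α) := by nlinarith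
    positivity
  have hm : 0 ≤ a * (m - s) + a * a * (3 - 2 * α) * m := by
    have : 0 ≤ m := le_max_right s 0
    have : 0 ≤ m - s := sub_nonneg.2 (le_max_left s 0)
    have : 0 ≤ 3 - 2 * α := by linarith
    positivity
  refine le_of_mul_le_mul_left ?_ hD
  nlinarith

lemma sq_norm_sub_succ_le (hS : ∀ x y, ‖S x - S y‖ ≤ ‖x - y‖) (hα0 : 0 ≤ α) (hα1 : α ≤ 1)
    (hQ : ∀ x y, ‖Q x - Q y‖ ≤ α * ‖x - y‖) (ha : ∀ n, a n ∈ Set.Icc (0 : ℝ) 1)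
    (hy : ∀ n, y n = (2 : ℝ)⁻¹ • (x n + x (n + 1)))
    (hrec : ∀ n, x (n + 1) = a n • Q (x n) + (1 - a n) • S (y n)) {z : H} (hz : S z = z)
    (n : ℕ) : ‖x (n + 1) - z‖ ^ 2
      ≤ (1 - (1 - α) * a n) * ‖x n - z‖ ^ 2 + 4 * a n * max ⟪Q z - z, x (n + 1) - z⟫ 0 := by
  obtain ⟨ha0, ha1⟩ := ha n
  refine sq_le_one_sub_mul_sq_add_mul_max ha0 ha1 hα0 hα1 ?_
  have hsplit : ‖x (n + 1) - z‖ ^ 2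
      = a n * ⟪Q (x n) - z, x (n + 1) - z⟫ + (1 - a n) * ⟪S (y n) - z, x (n + 1) - z⟫ := by
    rw [← real_inner_self_eq_norm_sq, ← real_inner_smul_left, ← real_inner_smul_left,
      ← inner_add_left]
    nth_rewrite 1 [hrec n]
    congr 1
    module
  have hQx : ⟪Q (x n) - z, x (n + 1) - z⟫
      ≤ α * ‖x n - z‖ * ‖x (n + 1) - z‖ + ⟪Q z - z, x (n + 1) - z⟫ := by
    rw [← sub_add_sub_cancel (Q (x n)) (Q z) z, inner_add_left]
    gcongr
    exact (real_inner_le_norm _ _).trans (mul_le_mul_of_nonneg_right (hQ _ _) (norm_nonneg _))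
  have hSy : ⟪S (y n) - z, x (n + 1) - z⟫
      ≤ (‖x n - z‖ + ‖x (n + 1) - z‖) / 2 * ‖x (n + 1) - z‖ := by
    refine (real_inner_le_norm _ _).trans (mul_le_mul_of_nonneg_right ?_ (norm_nonneg _))
    nth_rewrite 1 [← hz]
    exact (hS _ _).trans (hy n ▸ norm_inv_two_smul_add_sub_le _ _ _)
  rw [hsplit]
  gcongr

theorem tendsto_of_viscosity_implicit_midpoint [CompleteSpace H] (hS : ∀ x y, ‖S x - S y‖ ≤ ‖x - y‖)
    (hα0 : 0 ≤ α) (hα1 : α < 1) (hQ : ∀ x y, ‖Q x - Q y‖ ≤ α * ‖x - y‖)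
    (ha : ∀ n, a n ∈ Set.Icc (0 : ℝ) 1) (ha0 : Tendsto a atTop (𝓝 0)) (hasum : ¬ Summable a)
    (hadiff : Summable fun n => |a (n + 1) - a n|) (hy : ∀ n, y n = (2 : ℝ)⁻¹ • (x n + x (n + 1)))
    (hrec : ∀ n, x (n + 1) = a n • Q (x n) + (1 - a n) • S (y n)) {z : H} (hz : S z = z)
    (hzVI : ∀ w, S w = w → 0 ≤ ⟪z - Q z, w - z⟫) : Tendsto x atTop (𝓝 z) := by
  obtain ⟨K, hK⟩ := exists_forall_norm_sub_le hS hα0 hα1 hQ ha hy hrec hz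
  have hreg := tendsto_norm_sub_map hS ha ha0 hy hrec hK
    (tendsto_norm_sub_succ hS hα0 hα1 hQ ha hasum hadiff hy hrec hK)
  set M := max ‖x 0 - z‖ (‖Q z - z‖ / (1 - α))
  have hbdd (n : ℕ) : ‖x (n + 1)‖ ≤ ‖z‖ + M := (norm_le_norm_add_norm_sub' _ z).trans
    (by gcongr; exact norm_sub_fixedPoint_le hS hα0 hα1 hQ ha hy hrec hz _)
  have hlimsup (ε : ℝ) (hε : 0 < ε) : ∀ᶠ n in atTop, ⟪Q z - z, x (n + 1) - z⟫ ≤ ε := by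
    refine eventually_inner_sub_le_of_tendsto_norm_sub hS (fun w hw => ?_) hbdd
      (hreg.comp (tendsto_add_atTop_nat 1)) hε
    have := hzVI w hw
    rw [← neg_sub, inner_neg_left] at this
    linarith
  have h1α : 0 < 1 - α := by linarith
  have hsq : Tendsto (fun n => ‖x n - z‖ ^ 2) atTop (𝓝 0) := by
    refine tendsto_zero_of_le_one_sub_mul_add (γ := fun n => (1 - α) * a n)
      (σ := fun n => 4 / (1 - α) * max ⟪Q z - z, x (n + 1) - z⟫ 0) (β := 0)
      (fun _ => sq_nonneg _) (fun n => mul_nonneg h1α.le (ha n).1)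
      (fun n => mul_le_one₀ (sub_le_self _ hα0) (ha n).1 (ha n).2)
      ((summable_mul_left_iff h1α.ne').not.2 hasum) (fun ε hε => ?_) (fun _ => le_rfl)
      summable_zero (fun n => ?_)
    · filter_upwards [hlimsup (ε * (1 - α) / 4) (by positivity)] with n hn
      rw [div_mul_eq_mul_div, div_le_iff₀ h1α]
      linarith [max_le hn (by positivity : (0 : ℝ) ≤ ε * (1 - α) / 4)]
    · refine (sq_norm_sub_succ_le hS hα0 hα1.le hQ ha hy hrec hz n).trans_eq ?_
      field_simp
      rw [Pi.zero_apply, add_zero]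
  simpa [tendsto_iff_norm_sub_tendsto_zero] using hsq.sqrt

end ViscosityMidpoint

theorem stmt_13 {H : Type*} [NormedAddCommGroup H] [InnerProductSpace ℝ H] [CompleteSpace H]
    (S : H → H) (hS : ∀ x y : H, ‖S x - S y‖ ≤ ‖x - y‖)
    (hfix : ∃ p : H, S p = p)
    (Q : H → H) (α : ℝ) (hα0 : 0 < α) (hα1 : α < 1)
    (hQ : ∀ x y : H, ‖Q x - Q y‖ ≤ α * ‖x - y‖)
    (a : ℕ → ℝ) (ha : ∀ n, a n ∈ Set.Ioo (0 : ℝ) 1)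
    (ha0 : Filter.Tendsto a Filter.atTop (nhds 0))
    (hasum : ¬ Summable a)
    (hadiff : Summable (fun n => |a (n + 1) - a n|))
    (x : ℕ → H)
    (hrec : ∀ n, x (n + 1)
      = a n • Q (x n) + (1 - a n) • S ((2 : ℝ)⁻¹ • (x n + x (n + 1)))) :
    ∃ z : H, (S z = z ∧ ∀ w : H, S w = w → ⟪z - Q z, w - z⟫ ≥ 0)
      ∧ Filter.Tendsto x Filter.atTop (nhds z)
      ∧ ∀ z' : H, (S z' = z' ∧ ∀ w : H, S w = w → ⟪z' - Q z', w - z'⟫ ≥ 0) → z' = z := by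
  have hSc : Continuous S := (LipschitzWith.of_dist_le_mul (K := 1) fun x y => by
    simpa [dist_eq_norm] using hS x y).continuous
  obtain ⟨z, hz, hzVI⟩ := exists_mem_forall_inner_sub_nonneg hfix (isClosed_fixedPoints hSc)
    (convex_fixedPoints_of_norm_sub_le hS) hα1 hQ
  refine ⟨z, ⟨hz, hzVI⟩, ?_, fun z' hz' =>
    eq_of_inner_sub_nonneg hα1 hQ (hz'.2 z hz) (hzVI z' hz'.1)⟩
  exact tendsto_of_viscosity_implicit_midpoint hS hα0.le hα1 hQ
    (fun n => Set.Ioo_subset_Icc_self (ha n)) ha0 hasum hadiff (fun _ => rfl) hrec hz hzVI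
end
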